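/- For w₆ as above, an element μ in the kernel of ∂̄₁ (i.e. with μ²₂ = μ²₃ = 0) satisfies Condition A if and only if μ¹₁ = 0 and μ¹₃ = 0. Hence the space of ∂̄-closed elements satisfying Condition A, modulo the image of ∂̄₀, has complex dimension 4. -/
import Mathlib


open Finset

noncomputable section

open Finset

noncomputable section

/-- The Lie-algebra Dolbeault operator in a fixed direction:  for
`p = Sum.inl k` (direction `T̄_k`) it sends a `(1,0)`-vector with coefficients
`v` to `Σ_{i,β} E^β_{ki} v_i W_β`; for `p = Sum.inr α` (direction `W̄_α`) it is
zero. -/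
def DL {n m : ℕ} (E : Fin m → Fin n → Fin n → ℂ) (p : Fin n ⊕ Fin m) :
    ((Fin n ⊕ Fin m) → ℂ) →ₗ[ℂ] ((Fin n ⊕ Fin m) → ℂ) :=
  match p with
  | .inl k => LinearMap.pi (fun r => match r with
      | .inl _ => 0
      | .inr β => ∑ i, E β k i • LinearMap.proj (Sum.inl i))
  | .inr _ => 0

/-- `∂̄₀ : g^{1,0} → g^{*(0,1)} ⊗ g^{1,0}`, `(∂̄₀ V) (ē_q) = ∂̄_{ē_q} V`. -/
def Dbar0 {n m : ℕ} (E : Fin m → Fin n → Fin n → ℂ) :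
    ((Fin n ⊕ Fin m) → ℂ) →ₗ[ℂ]
      ((Fin n ⊕ Fin m) → (Fin n ⊕ Fin m) → ℂ) :=
  LinearMap.pi fun q => DL E q

/-- `∂̄₁ : g^{*(0,1)} ⊗ g^{1,0} → g^{*(0,2)} ⊗ g^{1,0}`,
`(∂̄₁ μ)(ē_p, ē_q) = ∂̄_{ē_p}(μ ē_q) - ∂̄_{ē_q}(μ ē_p)` (brackets of
`(0,1)`-vectors vanish as the structure is abelian). -/
def Dbar1 {n m : ℕ} (E : Fin m → Fin n → Fin n → ℂ) :
    ((Fin n ⊕ Fin m) → (Fin n ⊕ Fin m) → ℂ) →ₗ[ℂ]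
      ((Fin n ⊕ Fin m) → (Fin n ⊕ Fin m) → (Fin n ⊕ Fin m) → ℂ) :=
  LinearMap.pi fun p => LinearMap.pi fun q =>
    (DL E p).comp (LinearMap.proj q) - (DL E q).comp (LinearMap.proj p)


/-- The structural constants of `w₆` with its abelian complex structure:
the only nonzero constant is `E₁₂ = -1`. -/
def Ew6 : Fin 1 → Fin 2 → Fin 2 → ℂ :=
  fun _ k j => if k = 0 ∧ j = 1 then -1 else 0

/-- `F^α_{kj} = -conj (E^α_{jk})`; Condition A for `μ` is exactly the
`∂̄`-closedness equations with `F` in place of `E`, i.e. `μ ∈ ker (Dbar1 Fw6)`. -/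
def Fw6 : Fin 1 → Fin 2 → Fin 2 → ℂ :=
  fun α k j => -(starRingEnd ℂ) (Ew6 α j k)

lemma DL_inl_inr {n m : ℕ} (E : Fin m → Fin n → Fin n → ℂ) (k : Fin n)
    (v : (Fin n ⊕ Fin m) → ℂ) (β : Fin m) :
    DL E (.inl k) v (.inr β) = ∑ i, E β k i * v (.inl i) := by
  simp [DL, LinearMap.pi_apply]

lemma DL_inl_inl {n m : ℕ} (E : Fin m → Fin n → Fin n → ℂ) (k : Fin n)
    (v : (Fin n ⊕ Fin m) → ℂ) (j : Fin n) :
    DL E (.inl k) v (.inl j) = 0 := rfl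

lemma DL_inr {n m : ℕ} (E : Fin m → Fin n → Fin n → ℂ) (α : Fin m)
    (v : (Fin n ⊕ Fin m) → ℂ) : DL E (.inr α) v = 0 := rfl

lemma Dbar1_apply {n m : ℕ} (E : Fin m → Fin n → Fin n → ℂ)
    (μ : (Fin n ⊕ Fin m) → (Fin n ⊕ Fin m) → ℂ) (p q : Fin n ⊕ Fin m) :
    Dbar1 E μ p q = DL E p (μ q) - DL E q (μ p) := rfl

lemma Dbar0_apply {n m : ℕ} (E : Fin m → Fin n → Fin n → ℂ)
    (v : (Fin n ⊕ Fin m) → ℂ) (q : Fin n ⊕ Fin m) :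
    Dbar0 E v q = DL E q v := rfl

lemma dbarE_iff (μ : (Fin 2 ⊕ Fin 1) → (Fin 2 ⊕ Fin 1) → ℂ) :
    Dbar1 Ew6 μ = 0 ↔ (μ (.inl 1) (.inl 1) = 0 ∧ μ (.inr 0) (.inl 1) = 0) := by
  constructor
  · intro h
    have h1 := congrFun (congrFun (congrFun h (.inl 0)) (.inl 1)) (.inr 0)
    have h2 := congrFun (congrFun (congrFun h (.inl 0)) (.inr 0)) (.inr 0)
    simp [Dbar1_apply, DL_inl_inr, DL_inr, Ew6, Fin.sum_univ_two] at h1 h2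
    exact ⟨h1, h2⟩
  · rintro ⟨h1, h2⟩
    funext p q r
    rcases p with p | p <;> rcases q with q | q <;> rcases r with r | r <;>
      fin_cases p <;> fin_cases q <;> fin_cases r <;>
      simp_all [Dbar1_apply, DL_inl_inr, DL_inl_inl, DL_inr, Ew6, Fin.sum_univ_two]

lemma dbarF_iff (μ : (Fin 2 ⊕ Fin 1) → (Fin 2 ⊕ Fin 1) → ℂ) :
    Dbar1 Fw6 μ = 0 ↔ (μ (.inl 0) (.inl 0) = 0 ∧ μ (.inr 0) (.inl 0) = 0) := by
  constructor
  · intro h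
    have h1 := congrFun (congrFun (congrFun h (.inl 1)) (.inl 0)) (.inr 0)
    have h2 := congrFun (congrFun (congrFun h (.inl 1)) (.inr 0)) (.inr 0)
    simp [Dbar1_apply, DL_inl_inr, DL_inr, Fw6, Ew6, Fin.sum_univ_two] at h1 h2
    exact ⟨h1, h2⟩
  · rintro ⟨h1, h2⟩
    funext p q r
    rcases p with p | p <;> rcases q with q | q <;> rcases r with r | r <;>
      fin_cases p <;> fin_cases q <;> fin_cases r <;>
      simp_all [Dbar1_apply, DL_inl_inr, DL_inl_inl, DL_inr, Fw6, Ew6, Fin.sum_univ_two]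

abbrev Iw : Type := Fin 2 ⊕ Fin 1
abbrev Mw : Type := Iw → Iw → ℂ

def evw (q r : Iw) : Mw →ₗ[ℂ] ℂ where
  toFun μ := μ q r
  map_add' _ _ := rfl
  map_smul' _ _ := rfl

def Lw : Mw →ₗ[ℂ] (Fin 4 → ℂ) :=
  LinearMap.pi ![evw (.inl 0) (.inl 0), evw (.inr 0) (.inl 0),
    evw (.inl 1) (.inl 1), evw (.inr 0) (.inl 1)]

lemma ker_eq : LinearMap.ker (Dbar1 Ew6) ⊓ LinearMap.ker (Dbar1 Fw6)
    = LinearMap.ker Lw := by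
  ext μ
  simp only [Submodule.mem_inf, LinearMap.mem_ker, dbarE_iff, dbarF_iff]
  constructor
  · rintro ⟨⟨a, b⟩, c, d⟩
    funext i
    fin_cases i <;> simp [Lw, evw, a, b, c, d]
  · intro h
    refine ⟨⟨?_, ?_⟩, ?_, ?_⟩
    · exact congrFun h 2
    · exact congrFun h 3
    · exact congrFun h 0
    · exact congrFun h 1

lemma Lw_surj : Function.Surjective Lw := by
  intro c
  refine ⟨fun q r =>
    if q = .inl 0 ∧ r = .inl 0 then c 0 else
    if q = .inr 0 ∧ r = .inl 0 then c 1 else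
    if q = .inl 1 ∧ r = .inl 1 then c 2 else
    if q = .inr 0 ∧ r = .inl 1 then c 3 else 0, ?_⟩
  funext i
  fin_cases i <;> simp [Lw, evw]

lemma finrank_Mw : Module.finrank ℂ Mw = 9 := by
  simp [Module.finrank_pi_fintype]

lemma finrank_K : Module.finrank ℂ ↥(LinearMap.ker Lw) = 5 := by
  have h := LinearMap.finrank_range_add_finrank_ker Lw
  rw [LinearMap.range_eq_top.mpr Lw_surj, finrank_top] at h
  have h4 : Module.finrank ℂ (Fin 4 → ℂ) = 4 := by simp
  rw [finrank_Mw, h4] at h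
  omega

def mu0 : Mw := fun q r => if q = .inl 0 ∧ r = .inr 0 then 1 else 0

lemma Dbar0_eq_smul (v : Iw → ℂ) : Dbar0 Ew6 v = (-v (.inl 1)) • mu0 := by
  funext q r
  rcases q with q | q <;> rcases r with r | r <;> fin_cases q <;> fin_cases r <;>
    simp [Dbar0_apply, DL_inl_inr, DL_inl_inl, DL_inr, Ew6, mu0, Fin.sum_univ_two]

lemma range_Dbar0 : LinearMap.range (Dbar0 Ew6) = Submodule.span ℂ {mu0} := by
  apply le_antisymm
  · rintro _ ⟨v, rfl⟩
    rw [Dbar0_eq_smul]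
    exact Submodule.smul_mem _ _ (Submodule.mem_span_singleton_self _)
  · rw [Submodule.span_singleton_le_iff_mem]
    refine ⟨fun r => if r = .inl 1 then -1 else 0, ?_⟩
    rw [Dbar0_eq_smul]
    norm_num

lemma mu0_ne : mu0 ≠ 0 := by
  intro h
  have := congrFun (congrFun h (.inl 0)) (.inr 0)
  simp [mu0] at this

lemma finrank_range : Module.finrank ℂ ↥(LinearMap.range (Dbar0 Ew6)) = 1 := by
  rw [range_Dbar0, finrank_span_singleton mu0_ne]

lemma range_le : LinearMap.range (Dbar0 Ew6) ≤
    LinearMap.ker (Dbar1 Ew6) ⊓ LinearMap.ker (Dbar1 Fw6) := by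
  rintro _ ⟨v, rfl⟩
  rw [Dbar0_eq_smul]
  refine Submodule.smul_mem _ _ ?_
  rw [Submodule.mem_inf]
  constructor <;> rw [LinearMap.mem_ker]
  · rw [dbarE_iff]; simp [mu0]
  · rw [dbarF_iff]; simp [mu0]

set_option synthInstance.maxHeartbeats 1000000 in
set_option maxHeartbeats 1000000 in
theorem w6_final :
    Module.finrank ℂ
      (↥(LinearMap.ker (Dbar1 Ew6) ⊓ LinearMap.ker (Dbar1 Fw6)) ⧸
        Submodule.comap
          (LinearMap.ker (Dbar1 Ew6) ⊓ LinearMap.ker (Dbar1 Fw6)).subtype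
          (LinearMap.range (Dbar0 Ew6))) = 4 := by
  set K := LinearMap.ker (Dbar1 Ew6) ⊓ LinearMap.ker (Dbar1 Fw6) with hK
  set S := Submodule.comap K.subtype (LinearMap.range (Dbar0 Ew6)) with hS
  have hKfin : Module.finrank ℂ ↥K = 5 := by rw [hK, ker_eq]; exact finrank_K
  have hSfin : Module.finrank ℂ ↥S = 1 := by
    rw [(Submodule.comapSubtypeEquivOfLe range_le).finrank_eq]
    exact finrank_range
  have h := Submodule.finrank_quotient_add_finrank S
  rw [hSfin, hKfin] at h
  omega

set_option synthInstance.maxHeartbeats 1000000 in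
set_option maxHeartbeats 1000000 in
/-- For `w₆`:  a `∂̄`-closed `μ` (i.e. `μ²₂ = μ²₃ = 0`) satisfies Condition A
iff `μ¹₁ = 0` and `μ¹₃ = 0`; and the space of `∂̄`-closed elements satisfying
Condition A, modulo the image of `∂̄₀`, has complex dimension 4. -/
theorem w6_abelian_parameters :
    (∀ μ : (Fin 2 ⊕ Fin 1) → (Fin 2 ⊕ Fin 1) → ℂ,
      Dbar1 Ew6 μ = 0 →
        (Dbar1 Fw6 μ = 0 ↔
          (μ (.inl 0) (.inl 0) = 0 ∧ μ (.inr 0) (.inl 0) = 0))) ∧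
    LinearMap.range (Dbar0 Ew6) ≤
      LinearMap.ker (Dbar1 Ew6) ⊓ LinearMap.ker (Dbar1 Fw6) ∧
    Module.finrank ℂ
      (↥(LinearMap.ker (Dbar1 Ew6) ⊓ LinearMap.ker (Dbar1 Fw6)) ⧸
        Submodule.comap
          (LinearMap.ker (Dbar1 Ew6) ⊓ LinearMap.ker (Dbar1 Fw6)).subtype
          (LinearMap.range (Dbar0 Ew6))) = 4 := by
  refine ⟨fun μ _ => dbarF_iff μ, range_le, w6_final⟩
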